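/- arXiv:2409.14782 — 3 statements merged into one kernel-verified Lean document; each statement's English description precedes it below -/
import Mathlib

section
/- For constants A > 0 and B > 0, the function F(x) = A·x / ln(1+Bx) is concave on x > 0. -/
/-!
Since `A * x / log (1 + B * x) = (A / B) * g (B * x)` with `g t = t / log (1 + t)`, it suffices
that `g` is concave on `t > 0`. Its second derivative is
`(2 * t - (2 + t) * log (1 + t)) / ((1 + t) ^ 2 * log (1 + t) ^ 3)`, which is nonpositive by the
classical bound `2 * t / (t + 2) ≤ log (1 + t)`.
-/

open Real Set

lemma hasDerivAt_log_one_add {t : ℝ} (ht : -1 < t) :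
    HasDerivAt (fun t => log (1 + t)) (1 + t)⁻¹ t := by
  simpa using ((hasDerivAt_id t).const_add 1).log (by simp only [id_eq]; linarith)

lemma hasDerivAt_div_log_one_add {t : ℝ} (ht : 0 < t) :
    HasDerivAt (fun t => t / log (1 + t))
      ((log (1 + t) - t / (1 + t)) / log (1 + t) ^ 2) t := by
  have hL : log (1 + t) ≠ 0 := (log_pos (by linarith)).ne'
  refine ((hasDerivAt_id t).div (hasDerivAt_log_one_add (by linarith)) hL).congr_deriv ?_
  simp only [id_eq]
  field_simp

lemma hasDerivAt_deriv_div_log_one_add {t : ℝ} (ht : 0 < t) :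
    HasDerivAt (fun t => (log (1 + t) - t / (1 + t)) / log (1 + t) ^ 2)
      ((2 * t - (2 + t) * log (1 + t)) / ((1 + t) ^ 2 * log (1 + t) ^ 3)) t := by
  have hL : log (1 + t) ≠ 0 := (log_pos (by linarith)).ne'
  have hlog := hasDerivAt_log_one_add (t := t) (by linarith)
  have hquot : HasDerivAt (fun t => t / (1 + t)) ((1 + t)⁻¹ ^ 2) t := by
    refine ((hasDerivAt_id t).div ((hasDerivAt_id t).const_add 1)
      (by positivity)).congr_deriv ?_
    simp only [id_eq]
    field_simp
    ring
  refine ((hlog.sub hquot).div (hlog.pow 2) (pow_ne_zero 2 hL)).congr_deriv ?_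
  simp only [Pi.sub_apply, Pi.pow_apply]
  field_simp
  ring

lemma two_mul_sub_two_add_mul_log_one_add_nonpos {t : ℝ} (ht : 0 ≤ t) :
    2 * t - (2 + t) * log (1 + t) ≤ 0 := by
  have h := le_log_one_add_of_nonneg ht
  rw [div_le_iff₀ (by linarith)] at h
  linarith

lemma concaveOn_div_log_one_add : ConcaveOn ℝ (Ioi 0) fun t => t / log (1 + t) := by
  refine concaveOn_of_hasDerivWithinAt2_nonpos (convex_Ioi 0)
    (f' := fun t => (log (1 + t) - t / (1 + t)) / log (1 + t) ^ 2)
    (f'' := fun t => (2 * t - (2 + t) * log (1 + t)) / ((1 + t) ^ 2 * log (1 + t) ^ 3))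
    (fun t ht => (hasDerivAt_div_log_one_add ht).continuousAt.continuousWithinAt)
    ?_ ?_ ?_ <;> rw [interior_Ioi] <;> intro t (ht : 0 < t)
  · exact (hasDerivAt_div_log_one_add ht).hasDerivWithinAt
  · exact (hasDerivAt_deriv_div_log_one_add ht).hasDerivWithinAt
  · have hL : 0 < log (1 + t) := log_pos (by linarith)
    exact div_nonpos_of_nonpos_of_nonneg
      (two_mul_sub_two_add_mul_log_one_add_nonpos ht.le) (by positivity)

theorem stmt_0 (A B : ℝ) (hA : 0 < A) (hB : 0 < B) :
    ConcaveOn ℝ (Set.Ioi (0 : ℝ)) (fun x => A * x / Real.log (1 + B * x)) := by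
  have hpre : (B • LinearMap.id : ℝ →ₗ[ℝ] ℝ) ⁻¹' Ioi 0 = Ioi 0 := by
    ext x
    simp [mul_pos_iff_of_pos_left hB]
  have h := (concaveOn_div_log_one_add.comp_linearMap (B • LinearMap.id)).smul
    (div_nonneg hA.le hB.le)
  rw [hpre] at h
  refine h.congr fun x _ => ?_
  simp only [Function.comp_apply, LinearMap.smul_apply, LinearMap.id_apply, smul_eq_mul]
  field_simp
end

section
/- For constants A > 0 and B > 0, define G(x) = 2AB²x − (AB²x + 2AB)·ln(1+Bx). Then G(x) ≤ 0 for all x ≥ 0. -/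
open Real

theorem two_mul_le_add_two_mul_log_one_add {t : ℝ} (ht : 0 ≤ t) :
    2 * t ≤ (t + 2) * log (1 + t) := by
  have h := le_log_one_add_of_nonneg ht
  rwa [div_le_iff₀' (by linarith)] at h

theorem stmt_1 (A B : ℝ) (hA : 0 < A) (hB : 0 < B) (x : ℝ) (hx : 0 ≤ x) :
    2 * A * B ^ 2 * x - (A * B ^ 2 * x + 2 * A * B) * Real.log (1 + B * x) ≤ 0 := by
  have hlog := two_mul_le_add_two_mul_log_one_add (mul_nonneg hB.le hx)
  have hAB : 0 ≤ A * B := mul_nonneg hA.le hB.le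
  calc 2 * A * B ^ 2 * x - (A * B ^ 2 * x + 2 * A * B) * Real.log (1 + B * x)
      = A * B * (2 * (B * x) - (B * x + 2) * Real.log (1 + B * x)) := by ring
    _ ≤ 0 := mul_nonpos_of_nonneg_of_nonpos hAB (by linarith)
end

section
/- Let I be a finite index set, A_i : X → ℝ≥0 and B_i : X → ℝ>0 functions on a set X. Then sup_{x∈X} Σ_i A_i(x)/B_i(x) = sup_{x∈X} sup_{y∈ℝ^I} Σ_i (2 y_i √(A_i(x)) − y_i² B_i(x)), and for fixed x the inner supremum over y is attained at y_i = √(A_i(x))/B_i(x). -/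
/-!
Completing the square, `2 y √a - y² b = a / b - b (y - √a / b)²` for `b > 0`, so each summand
of the quadratic transform is at most `a / b`, with equality exactly at `y = √a / b`. Hence the
supremum over `y` of the transformed sum is attained and equals `∑ aᵢ / bᵢ` for each `x`.
-/

open Finset

lemma two_mul_mul_sqrt_sub_sq_mul_le_div {a b : ℝ} (ha : 0 ≤ a) (hb : 0 < b) (y : ℝ) :
    2 * y * √a - y ^ 2 * b ≤ a / b := by
  rw [le_div_iff₀ hb]
  nlinarith [sq_nonneg (√a - y * b), Real.sq_sqrt ha]

lemma two_mul_sqrt_div_mul_sqrt_sub_sq_mul {a b : ℝ} (ha : 0 ≤ a) (hb : 0 < b) :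
    2 * (√a / b) * √a - (√a / b) ^ 2 * b = a / b := by
  field_simp
  linear_combination Real.sq_sqrt ha

section QuadraticTransform

variable {ι : Type*} [Fintype ι] {a b : ι → ℝ}

lemma sum_two_mul_mul_sqrt_sub_sq_mul_le_sum_div (ha : ∀ i, 0 ≤ a i) (hb : ∀ i, 0 < b i)
    (y : ι → ℝ) : ∑ i, (2 * y i * √(a i) - y i ^ 2 * b i) ≤ ∑ i, a i / b i :=
  sum_le_sum fun i _ => two_mul_mul_sqrt_sub_sq_mul_le_div (ha i) (hb i) (y i)

lemma sum_two_mul_sqrt_div_mul_sqrt_sub_sq_mul (ha : ∀ i, 0 ≤ a i) (hb : ∀ i, 0 < b i) :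
    ∑ i, (2 * (√(a i) / b i) * √(a i) - (√(a i) / b i) ^ 2 * b i) = ∑ i, a i / b i :=
  sum_congr rfl fun i _ => two_mul_sqrt_div_mul_sqrt_sub_sq_mul (ha i) (hb i)

lemma isGreatest_range_sum_two_mul_mul_sqrt_sub_sq_mul (ha : ∀ i, 0 ≤ a i)
    (hb : ∀ i, 0 < b i) :
    IsGreatest (Set.range fun y : ι → ℝ => ∑ i, (2 * y i * √(a i) - y i ^ 2 * b i))
      (∑ i, a i / b i) :=
  ⟨⟨fun i => √(a i) / b i, sum_two_mul_sqrt_div_mul_sqrt_sub_sq_mul ha hb⟩,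
    Set.forall_mem_range.2 (sum_two_mul_mul_sqrt_sub_sq_mul_le_sum_div ha hb)⟩

lemma iSup_sum_two_mul_mul_sqrt_sub_sq_mul (ha : ∀ i, 0 ≤ a i) (hb : ∀ i, 0 < b i) :
    ⨆ y : ι → ℝ, ∑ i, (2 * y i * √(a i) - y i ^ 2 * b i) = ∑ i, a i / b i :=
  (isGreatest_range_sum_two_mul_mul_sqrt_sub_sq_mul ha hb).csSup_eq

end QuadraticTransform

theorem stmt_8 {ι X : Type*} [Fintype ι] (A B : ι → X → ℝ)
    (hA : ∀ i x, 0 ≤ A i x) (hB : ∀ i x, 0 < B i x) :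
    (⨆ x : X, ∑ i, A i x / B i x)
      = (⨆ x : X, ⨆ y : ι → ℝ, ∑ i, (2 * y i * Real.sqrt (A i x) - (y i) ^ 2 * B i x)) ∧
    ∀ x : X, ∀ y : ι → ℝ,
      ∑ i, (2 * y i * Real.sqrt (A i x) - (y i) ^ 2 * B i x)
        ≤ ∑ i, (2 * (Real.sqrt (A i x) / B i x) * Real.sqrt (A i x)
              - (Real.sqrt (A i x) / B i x) ^ 2 * B i x) := by
  refine ⟨iSup_congr fun x =>
    (iSup_sum_two_mul_mul_sqrt_sub_sq_mul (hA · x) (hB · x)).symm, fun x y => ?_⟩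
  rw [sum_two_mul_sqrt_div_mul_sqrt_sub_sq_mul (hA · x) (hB · x)]
  exact sum_two_mul_mul_sqrt_sub_sq_mul_le_sum_div (hA · x) (hB · x) y
end
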